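/- arXiv:1110.0777 — 2 statements merged into one kernel-verified Lean document; each statement's English description precedes it below -/
import Mathlib

section
/- For the standard horocycle parametrization: if g ∈ SL(2,ℝ) has Iwasawa decomposition g = h(x)a(y)k(θ) with sin θ ≠ 0, set R = y/(sin θ)², W = cot θ, and α = x − yW. Then for all real t with t ≠ −W, g·h(t + W) = h(α − R t/(t²+1))·a(R/(t²+1))·k(−arccot t) as elements of SL(2,ℝ) up to sign (i.e., in PSL(2,ℝ)). -/
open Matrix Real

/-- `h(x) = [[1, x], [0, 1]]`. -/
noncomputable def hMat (x : ℝ) : Matrix (Fin 2) (Fin 2) ℝ := !![1, x; 0, 1]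

/-- `a(y) = diag(y^{1/2}, y^{-1/2})`. -/
noncomputable def aMat (y : ℝ) : Matrix (Fin 2) (Fin 2) ℝ :=
  !![Real.sqrt y, 0; 0, (Real.sqrt y)⁻¹]

/-- `k(θ) = [[cos θ, sin θ], [-sin θ, cos θ]]`. -/
noncomputable def kMat (θ : ℝ) : Matrix (Fin 2) (Fin 2) ℝ :=
  !![Real.cos θ, Real.sin θ; -Real.sin θ, Real.cos θ]

/-! For `sin θ > 0` the proof is a normal-form computation in the group: `k(θ) h(cot θ)` and
`k(π/2) h(t)` are put into Iwasawa form, after which `a(y) h(x) = h(yx) a(y)` moves every `a`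
to the right of every `h`. The case `sin θ < 0` reduces to it through `k(θ + π) = -k(θ)`, which
is where the sign ambiguity comes from. -/

theorem hMat_add (x x' : ℝ) : hMat (x + x') = hMat x * hMat x' := by
  ext i j; fin_cases i <;> fin_cases j <;> simp [hMat]; ring

theorem aMat_mul_aMat {y : ℝ} (hy : 0 ≤ y) (y' : ℝ) : aMat y * aMat y' = aMat (y * y') := by
  ext i j; fin_cases i <;> fin_cases j <;> simp [aMat, Real.sqrt_mul hy, mul_comm]

theorem aMat_mul_hMat {y : ℝ} (hy : 0 ≤ y) (x : ℝ) :
    aMat y * hMat x = hMat (y * x) * aMat y := by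
  ext i j; fin_cases i <;> fin_cases j <;> simp [aMat, hMat]
  rcases hy.eq_or_lt with rfl | hy
  · simp
  · field_simp; rw [Real.sq_sqrt hy.le, mul_comm]

theorem kMat_add_pi (θ : ℝ) : kMat (θ + π) = -kMat θ := by
  ext i j; fin_cases i <;> fin_cases j <;> simp [kMat]

theorem kMat_mul_hMat_cot {θ : ℝ} (hs : 0 < Real.sin θ) :
    kMat θ * hMat (Real.cos θ / Real.sin θ) =
      hMat (-(Real.cos θ / Real.sin θ)) * aMat (Real.sin θ ^ 2)⁻¹ * kMat (π / 2) := by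
  have hpy := Real.cos_sq_add_sin_sq θ
  ext i j; fin_cases i <;> fin_cases j <;>
    simp [kMat, hMat, aMat, Real.sqrt_inv, Real.sqrt_sq hs.le] <;> field_simp <;> linarith

theorem kMat_pi_div_two_mul_hMat (t : ℝ) :
    kMat (π / 2) * hMat t =
      -(hMat (-t / (t ^ 2 + 1)) * aMat (t ^ 2 + 1)⁻¹ * kMat (Real.arctan t - π / 2)) := by
  have ht : 0 < t ^ 2 + 1 := by positivity
  have hu := Real.sq_sqrt ht.le
  have hcos : Real.cos (Real.arctan t - π / 2) = t / Real.sqrt (t ^ 2 + 1) := by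
    rw [Real.cos_sub_pi_div_two, Real.sin_arctan, add_comm]
  have hsin : Real.sin (Real.arctan t - π / 2) = -(1 / Real.sqrt (t ^ 2 + 1)) := by
    rw [Real.sin_sub_pi_div_two, Real.cos_arctan, add_comm]
  ext i j; fin_cases i <;> fin_cases j <;>
    simp [kMat, hMat, aMat, Real.sqrt_inv, hcos, hsin] <;> field_simp <;> simp only [hu] <;> ring

theorem horocycle_flow_of_sin_pos {y θ : ℝ} (hy : 0 ≤ y) (hs : 0 < Real.sin θ) (x t : ℝ) :
    hMat x * aMat y * kMat θ * hMat (t + Real.cos θ / Real.sin θ) =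
      -(hMat (x - y * (Real.cos θ / Real.sin θ) - y / Real.sin θ ^ 2 * t / (t ^ 2 + 1)) *
          aMat (y / Real.sin θ ^ 2 / (t ^ 2 + 1)) * kMat (Real.arctan t - π / 2)) := by
  set W := Real.cos θ / Real.sin θ
  set R := y * (Real.sin θ ^ 2)⁻¹
  set φ := Real.arctan t - π / 2
  have hR : 0 ≤ R := by positivity
  calc hMat x * aMat y * kMat θ * hMat (t + W)
      = hMat x * aMat y * (kMat θ * hMat W) * hMat t := by
        rw [add_comm, hMat_add]; simp only [Matrix.mul_assoc]
    _ = hMat x * (aMat y * hMat (-W)) * aMat (Real.sin θ ^ 2)⁻¹ * (kMat (π / 2) * hMat t) := by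
        rw [kMat_mul_hMat_cot hs]; simp only [Matrix.mul_assoc, W]
    _ = -(hMat x * hMat (y * -W) * (aMat y * aMat (Real.sin θ ^ 2)⁻¹) *
          (hMat (-t / (t ^ 2 + 1)) * aMat (t ^ 2 + 1)⁻¹ * kMat φ)) := by
        rw [aMat_mul_hMat hy, kMat_pi_div_two_mul_hMat]
        simp only [Matrix.mul_neg, Matrix.mul_assoc, φ]
    _ = -(hMat (x + y * -W) * (aMat R * hMat (-t / (t ^ 2 + 1))) * aMat (t ^ 2 + 1)⁻¹ *
          kMat φ) := by
        rw [aMat_mul_aMat hy, ← hMat_add]; simp only [Matrix.mul_assoc, R]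
    _ = -(hMat (x + y * -W) * hMat (R * (-t / (t ^ 2 + 1))) * (aMat R * aMat (t ^ 2 + 1)⁻¹) *
          kMat φ) := by
        rw [aMat_mul_hMat hR]; simp only [Matrix.mul_assoc]
    _ = _ := by
        rw [aMat_mul_aMat hR, ← hMat_add]
        congr 4; ring

theorem horocycle_flow_parametrization_general (g : Matrix (Fin 2) (Fin 2) ℝ)
    (x y θ : ℝ) (hy : 0 < y) (hθ : Real.sin θ ≠ 0)
    (hg : g = hMat x * aMat y * kMat θ)
    (R W α : ℝ) (hR : R = y / Real.sin θ ^ 2)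
    (hW : W = Real.cos θ / Real.sin θ) (hα : α = x - y * W)
    (t : ℝ) :
    g * hMat (t + W) =
        hMat (α - R * t / (t ^ 2 + 1)) * aMat (R / (t ^ 2 + 1)) *
          kMat (Real.arctan t - Real.pi / 2) ∨
    g * hMat (t + W) =
        -(hMat (α - R * t / (t ^ 2 + 1)) * aMat (R / (t ^ 2 + 1)) *
          kMat (Real.arctan t - Real.pi / 2)) := by
  subst hg hR hW hα
  rcases hθ.lt_or_gt with hs | hs
  · have hs' : 0 < Real.sin (θ + π) := by rw [Real.sin_add_pi]; linarith
    have h := horocycle_flow_of_sin_pos hy.le hs' x t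
    rw [kMat_add_pi, Real.sin_add_pi, Real.cos_add_pi, neg_div_neg_eq, neg_sq] at h
    left
    simpa only [Matrix.mul_neg, Matrix.neg_mul, neg_neg, neg_inj] using h
  · exact Or.inr (horocycle_flow_of_sin_pos hy.le hs x t)

/-- **Horocycle flow parametrization.** If `g = h(x)a(y)k(θ)` with `y > 0` and
`sin θ ≠ 0`, set `R = y/(sin θ)²`, `W = cot θ`, `α = x − yW`. Then for `t ≠ −W`, up
to sign (i.e. in `PSL(2,ℝ)`),
`g·h(t+W) = h(α − Rt/(t²+1)) · a(R/(t²+1)) · k(−arccot t)`,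
where `−arccot t = arctan t − π/2`. -/
theorem horocycle_flow_parametrization (g : Matrix (Fin 2) (Fin 2) ℝ)
    (x y θ : ℝ) (hy : 0 < y) (hθ : Real.sin θ ≠ 0)
    (hg : g = hMat x * aMat y * kMat θ)
    (R W α : ℝ) (hR : R = y / Real.sin θ ^ 2)
    (hW : W = Real.cos θ / Real.sin θ) (hα : α = x - y * W)
    (t : ℝ) (ht : t ≠ -W) :
    g * hMat (t + W) =
        hMat (α - R * t / (t ^ 2 + 1)) * aMat (R / (t ^ 2 + 1)) *
          kMat (Real.arctan t - Real.pi / 2) ∨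
    g * hMat (t + W) =
        -(hMat (α - R * t / (t ^ 2 + 1)) * aMat (R / (t ^ 2 + 1)) *
          kMat (Real.arctan t - Real.pi / 2)) :=
  horocycle_flow_parametrization_general g x y θ hy hθ hg R W α hR hW hα t
end

section
/- Let D ≥ 1 be real, N a positive integer with D ≤ N^{1/2 − ε} for some ε > 0, and let S = {(d,t,k) : 1 ≤ d ≤ D, 1 ≤ |t| ≤ D, 1 ≤ |k| ≤ N, gcd(k,N) ≤ B, d·k ≡ t (mod N)}. Then |S| ≤ C_ε · B · D² · N^{ε} for some constant C_ε (i.e., ∑_k c_k ≪ D² N^{ε} where c_k counts pairs (d,t) with dk ≡ t mod N). -/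
/-!
Write `d * k - t = m * N`. With `C = ⌈D⌉` the pair `(d, m)` ranges over `[1, C] × [-2C, 2C]`,
and once `(d, m)` is fixed, `k` satisfies `|d * k - m * N| ≤ C`, leaving at most `2C / d + 1`
choices, after which `t` is determined. Summing over `d` gives `O(C² log C)` triples, and
`log C ≪ N^ε / ε` because `D ≤ N`.
-/

open Finset Real

theorem card_filter_abs_mul_sub_le (s : Finset ℤ) {d : ℝ} (hd : 0 < d) (c : ℝ) {r : ℝ}
    (hr : 0 ≤ r) : (#{k ∈ s | |d * ((k : ℤ) : ℝ) - c| ≤ r} : ℝ) ≤ 2 * r / d + 1 := by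
  have hsub : {k ∈ s | |d * ((k : ℤ) : ℝ) - c| ≤ r} ⊆ Icc ⌈(c - r) / d⌉ ⌊(c + r) / d⌋ := by
    intro k hk
    obtain ⟨hlo, hhi⟩ := abs_le.mp (mem_filter.mp hk).2
    rw [mem_Icc, Int.ceil_le, Int.le_floor, div_le_iff₀ hd, le_div_iff₀ hd]
    constructor <;> linarith
  calc (#{k ∈ s | |d * ((k : ℤ) : ℝ) - c| ≤ r} : ℝ) ≤ #(Icc ⌈(c - r) / d⌉ ⌊(c + r) / d⌋) := by
        exact_mod_cast card_le_card hsub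
    _ = max ((⌊(c + r) / d⌋ + 1 - ⌈(c - r) / d⌉ : ℤ) : ℝ) 0 := by
        rw [Int.card_Icc, ← Int.cast_natCast, Int.toNat_eq_max, Int.cast_max, Int.cast_zero]
    _ ≤ 2 * r / d + 1 := by
        refine max_le ?_ (by positivity)
        have h := Int.floor_le ((c + r) / d)
        have h' := Int.le_ceil ((c - r) / d)
        have hsplit : (c + r) / d - (c - r) / d = 2 * r / d := by ring
        push_cast
        linarith

theorem sum_Icc_int_inv_le_one_add_log (n : ℕ) :
    ∑ d ∈ Icc (1 : ℤ) n, (d : ℝ)⁻¹ ≤ 1 + log n := by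
  have hIcc : Icc (1 : ℤ) n = (Icc 1 n).map Nat.castEmbedding := by
    rw [← Finset.coe_inj]
    push_cast
    exact (Nat.image_cast_int_Icc 1 n).symm
  rw [hIcc, sum_map]
  simpa [harmonic_eq_sum_Icc] using harmonic_le_one_add_log n

noncomputable def congruenceTriples (N C : ℕ) : Finset (ℤ × ℤ × ℤ) :=
  {p ∈ Icc (-(N : ℤ)) N ×ˢ Icc 1 (C : ℤ) ×ˢ Icc (-(C : ℤ)) C | (N : ℤ) ∣ p.2.1 * p.1 - p.2.2}

theorem card_filter_congruenceTriples_le (N C : ℕ) {d : ℤ} (hd : 0 < d) (m : ℤ) :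
    (#{p ∈ congruenceTriples N C | p.2.1 = d ∧ p.2.1 * p.1 - p.2.2 = m * N} : ℝ) ≤
      2 * C / d + 1 := by
  have hproj : #{p ∈ congruenceTriples N C | p.2.1 = d ∧ p.2.1 * p.1 - p.2.2 = m * N} ≤
      #{k ∈ Icc (-(N : ℤ)) N | |(d : ℝ) * ((k : ℤ) : ℝ) - (m * N : ℤ)| ≤ C} := by
    refine card_le_card_of_injOn Prod.fst ?_ ?_
    · rintro ⟨k, d', t⟩ hp
      simp only [congruenceTriples, coe_filter, mem_filter, mem_product, mem_Icc,
        Set.mem_ofPred_eq] at hp ⊢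
      obtain ⟨⟨⟨hk, -, ht⟩, -⟩, rfl, hm⟩ := hp
      refine ⟨hk, ?_⟩
      rw [← Int.cast_mul, ← Int.cast_sub, ← hm, sub_sub_cancel]
      exact_mod_cast abs_le.mpr ht
    · rintro ⟨k, d₁, t₁⟩ hp ⟨k', d₂, t₂⟩ hp' (rfl : k = k')
      simp only [coe_filter, Set.mem_ofPred_eq] at hp hp'
      obtain ⟨-, rfl, hm⟩ := hp
      obtain ⟨-, rfl, hm'⟩ := hp'
      simp only [Prod.mk.injEq, true_and]
      linarith
  calc _ ≤ (#{k ∈ Icc (-(N : ℤ)) N | |(d : ℝ) * ((k : ℤ) : ℝ) - (m * N : ℤ)| ≤ C} : ℝ) := by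
        exact_mod_cast hproj
    _ ≤ 2 * C / d + 1 := card_filter_abs_mul_sub_le _ (by exact_mod_cast hd) _ (by positivity)

theorem congruenceTriples_subset_biUnion (N C : ℕ) (hN : 0 < N) :
    congruenceTriples N C ⊆ (Icc 1 (C : ℤ) ×ˢ Icc (-(2 * C : ℤ)) (2 * C)).biUnion
      fun x => {p ∈ congruenceTriples N C | p.2.1 = x.1 ∧ p.2.1 * p.1 - p.2.2 = x.2 * N} := by
  intro p hp
  obtain ⟨⟨⟨hk₁, hk₂⟩, ⟨hd₁, hd₂⟩, ⟨ht₁, ht₂⟩⟩, m, hm⟩ := by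
    simpa only [congruenceTriples, mem_filter, mem_product, mem_Icc] using hp
  have hN₀ : (0 : ℤ) < N := Int.natCast_pos.mpr hN
  have hbound : |p.2.1 * p.1 - p.2.2| ≤ N * (2 * C) := abs_le.mpr ⟨by nlinarith, by nlinarith⟩
  rw [hm, abs_mul, abs_of_pos hN₀] at hbound
  have hm₂ : |m| ≤ 2 * C := le_of_mul_le_mul_left hbound hN₀
  simp only [mem_biUnion, mem_product, mem_Icc, mem_filter]
  exact ⟨(p.2.1, m), ⟨⟨hd₁, hd₂⟩, abs_le.mp hm₂⟩, hp, rfl, by rw [hm, mul_comm]⟩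

theorem card_congruenceTriples_le (N C : ℕ) (hN : 0 < N) :
    (#(congruenceTriples N C) : ℝ) ≤ (4 * C + 1) * (C * (3 + 2 * log C)) := by
  have hcover := (card_le_card (congruenceTriples_subset_biUnion N C hN)).trans card_biUnion_le
  have hcardm : (#(Icc (-(2 * C : ℤ)) (2 * C)) : ℝ) = 4 * C + 1 := by
    rw [Int.card_Icc]; norm_cast; omega
  have hcardd : (#(Icc (1 : ℤ) C) : ℝ) = C := by
    rw [Int.card_Icc, add_sub_cancel_right, Int.toNat_natCast]
  calc (#(congruenceTriples N C) : ℝ)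
      ≤ ∑ x ∈ Icc 1 (C : ℤ) ×ˢ Icc (-(2 * C : ℤ)) (2 * C),
          (#{p ∈ congruenceTriples N C | p.2.1 = x.1 ∧ p.2.1 * p.1 - p.2.2 = x.2 * N} : ℝ) := by
        exact_mod_cast hcover
    _ ≤ ∑ x ∈ Icc 1 (C : ℤ) ×ˢ Icc (-(2 * C : ℤ)) (2 * C), (2 * C / (x.1 : ℝ) + 1) := by
        refine sum_le_sum fun x hx => card_filter_congruenceTriples_le N C ?_ x.2
        exact (mem_Icc.mp (mem_product.mp hx).1).1
    _ = (4 * C + 1) * ∑ d ∈ Icc (1 : ℤ) C, (2 * C / (d : ℝ) + 1) := by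
        simp only [sum_product, sum_const, nsmul_eq_mul, hcardm, mul_sum]
    _ = (4 * C + 1) * (2 * C * ∑ d ∈ Icc (1 : ℤ) C, (d : ℝ)⁻¹ + C) := by
        simp only [sum_add_distrib, sum_const, nsmul_eq_mul, hcardd, mul_one, mul_sum,
          div_eq_mul_inv]
    _ ≤ (4 * C + 1) * (2 * C * (1 + log C) + C) := by
        gcongr
        exact sum_Icc_int_inv_le_one_add_log C
    _ = (4 * C + 1) * (C * (3 + 2 * log C)) := by ring

theorem natCeil_bound_le_rpow {ε D N : ℝ} (hε : 0 < ε) (hD : 1 ≤ D) (hDN : D ≤ N) :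
    (4 * ⌈D⌉₊ + 1) * (⌈D⌉₊ * (3 + 2 * log ⌈D⌉₊)) ≤ (90 + 36 / ε) * D ^ 2 * N ^ ε := by
  have hDC : D ≤ ⌈D⌉₊ := Nat.le_ceil D
  have hCD : (⌈D⌉₊ : ℝ) < D + 1 := Nat.ceil_lt_add_one (by linarith)
  have hlogC : log ⌈D⌉₊ ≤ 1 + log N :=
    calc log ⌈D⌉₊ ≤ log (2 * N) := log_le_log (by linarith) (by linarith)
      _ = log 2 + log N := log_mul two_ne_zero (by linarith)
      _ ≤ 1 + log N := by linarith [log_two_lt_d9]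
  have hlogN : log N ≤ N ^ ε / ε := log_le_rpow_div (by linarith) hε
  have hX : 1 ≤ N ^ ε := one_le_rpow (by linarith) hε.le
  calc (4 * ⌈D⌉₊ + 1) * (⌈D⌉₊ * (3 + 2 * log ⌈D⌉₊))
      ≤ (9 * D) * (2 * D * (5 + 2 * log N)) := by
        have hlogC₀ : 0 ≤ log ⌈D⌉₊ := log_nonneg (by linarith)
        gcongr ?_ * (?_ * ?_) <;> linarith
    _ ≤ (9 * D) * (2 * D * (5 * N ^ ε + 2 * (N ^ ε / ε))) := by gcongr; linarith
    _ = (90 + 36 / ε) * D ^ 2 * N ^ ε := by field_simp; ring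

/-- **Counting triples for the congruence `d·k ≡ t (mod N)`.** For each `ε > 0`
there is a constant `C_ε` such that for all `D ≥ 1`, `N ≥ 1` with `D ≤ N^{1/2−ε}`
and all `B`, the number of triples `(k, d, t)` with `1 ≤ d ≤ D`, `1 ≤ |t| ≤ D`,
`1 ≤ |k| ≤ N`, `gcd(k,N) ≤ B` and `d·k ≡ t (mod N)` is at most `C_ε·B·D²·N^ε`. -/
theorem congruence_triple_count (ε : ℝ) (hε : 0 < ε) :
    ∃ C : ℝ, 0 < C ∧ ∀ (D : ℝ) (N B : ℕ), 1 ≤ D → 0 < N →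
      D ≤ (N : ℝ) ^ ((1 : ℝ) / 2 - ε) →
      (((Finset.Icc (-(N : ℤ)) N ×ˢ
          (Finset.Icc (-⌈D⌉) ⌈D⌉ ×ˢ Finset.Icc (-⌈D⌉) ⌈D⌉)).filter
          (fun p : ℤ × ℤ × ℤ =>
            1 ≤ p.2.1 ∧ (p.2.1 : ℝ) ≤ D ∧
            1 ≤ |p.2.2| ∧ (|p.2.2| : ℝ) ≤ D ∧
            1 ≤ |p.1| ∧ |p.1| ≤ (N : ℤ) ∧
            Int.gcd p.1 N ≤ B ∧
            (N : ℤ) ∣ p.2.1 * p.1 - p.2.2)).card : ℝ) ≤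
        C * B * D ^ 2 * (N : ℝ) ^ ε := by
  refine ⟨90 + 36 / ε, by positivity, fun D N B hD hN hDN => ?_⟩
  obtain rfl | hB := B.eq_zero_or_pos
  · simp [Int.gcd_eq_zero_iff, hN.ne']
  have hDN' : D ≤ N := hDN.trans <| by
    simpa using rpow_le_rpow_of_exponent_le (Nat.one_le_cast.mpr hN) (by linarith : 1 / 2 - ε ≤ 1)
  calc _ ≤ (#(congruenceTriples N ⌈D⌉₊) : ℝ) := by
        gcongr
        rintro ⟨k, d, t⟩ hp
        simp only [congruenceTriples, mem_filter, mem_product, mem_Icc] at hp ⊢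
        obtain ⟨⟨hk, -⟩, hd, hdD, -, htD, -, -, -, hdvd⟩ := hp
        have hdC : d ≤ (⌈D⌉₊ : ℤ) := by exact_mod_cast hdD.trans (Nat.le_ceil D)
        have htC : |t| ≤ (⌈D⌉₊ : ℤ) := by exact_mod_cast htD.trans (Nat.le_ceil D)
        exact ⟨⟨hk, ⟨hd, hdC⟩, abs_le.mp htC⟩, hdvd⟩
    _ ≤ (4 * ⌈D⌉₊ + 1) * (⌈D⌉₊ * (3 + 2 * log ⌈D⌉₊)) := card_congruenceTriples_le N _ hN
    _ ≤ (90 + 36 / ε) * D ^ 2 * N ^ ε := natCeil_bound_le_rpow hε hD hDN'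
    _ ≤ B * ((90 + 36 / ε) * D ^ 2 * N ^ ε) :=
        le_mul_of_one_le_left (by positivity) (by exact_mod_cast hB)
    _ = (90 + 36 / ε) * B * D ^ 2 * N ^ ε := by ring
end
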